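/- Let 𝒜^{ML} be the block matrix obtained from a symmetric block-tridiagonal matrix 𝒜 (with off-diagonal blocks A_0,…,A_{N−1} and zero diagonal blocks) by replacing the last block row with (G_0, G_1, …, G_N), and let 𝒮 = diag(I, …, I, H) with H symmetric positive definite. Then 𝒮𝒜^{ML} is symmetric if and only if G_j = 0 for 0 ≤ j ≤ N−2, H G_{N−1} = A_{N−1}, and H G_N = (H G_N)ᵀ. -/

import Mathlib

/-!
Away from its last block row, `𝒮 𝒜ᴹᴸ` agrees with `𝒜`, so its blocks with neither index equal
to `N` are already symmetric, while its last block row is `(1/2)(H G_0, …, H G_N)`. Symmetry thus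
asks this row to be the transpose of the last block column of `𝒜` (zero except `(1/2)A_{N-1}ᵀ` in
block `N-1`) and the corner block `(1/2) H G_N` to be symmetric. As `H` is invertible,
`H G_j = 0` forces `G_j = 0`.
-/

open Matrix

theorem Matrix.isSymm_sigma_iff_of_symm_off {ι : Type*} {α : ι → Type*} {R : Type*}
    (M : Matrix (Σ i, α i) (Σ i, α i) R) (k : ι)
    (hM : ∀ i j a b, i ≠ k → j ≠ k → M ⟨i, a⟩ ⟨j, b⟩ = M ⟨j, b⟩ ⟨i, a⟩) :
    M.IsSymm ↔ ∀ j a b, M ⟨k, a⟩ ⟨j, b⟩ = M ⟨j, b⟩ ⟨k, a⟩ := by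
  refine ⟨fun h j a b => (h.apply ⟨k, a⟩ ⟨j, b⟩).symm, fun h => ?_⟩
  rw [IsSymm.ext_iff]
  rintro ⟨i, a⟩ ⟨j, b⟩
  by_cases hi : i = k
  · subst hi; exact (h j a b).symm
  by_cases hj : j = k
  · subst hj; exact h i b a
  exact hM j i b a hj hi

theorem Fin.forall_iff_lt_pred_and_pred_and_last {N : ℕ} (hN : 1 ≤ N)
    {P : Fin (N + 1) → Prop} :
    (∀ j, P j) ↔
      (∀ j : Fin (N + 1), j.1 + 2 ≤ N → P j) ∧ P ⟨N - 1, Nat.sub_lt_succ N 1⟩ ∧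
        P (Fin.last N) := by
  refine ⟨fun h => ⟨fun j _ => h j, h _, h _⟩, fun ⟨hlt, hpred, hlast⟩ j => ?_⟩
  rcases Nat.lt_or_ge (j.1 + 2) (N + 1) with hj | hj
  · exact hlt j (by omega)
  obtain h | h : j = ⟨N - 1, Nat.sub_lt_succ N 1⟩ ∨ j = Fin.last N := by
    rw [Fin.ext_iff, Fin.ext_iff]; simp only [Fin.val_last]; omega
  exacts [h ▸ hpred, h ▸ hlast]

theorem Fin.val_lt_of_val_eq_succ {N : ℕ} {i j : Fin (N + 1)} (h : j.1 = i.1 + 1) : i.1 < N :=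
  Nat.succ_lt_succ_iff.mp (lt_of_eq_of_lt h.symm j.isLt)

abbrev BlockIndex (N : ℕ) := (l : Fin (N + 1)) × Fin (l.1 + 1)

section

variable {N : ℕ} {A : ∀ l : Fin N, Matrix (Fin (l.1 + 2)) (Fin (l.1 + 1)) ℝ}
    {G : ∀ j : Fin (N + 1), Matrix (Fin (N + 1)) (Fin (j.1 + 1)) ℝ}
    {H : Matrix (Fin (N + 1)) (Fin (N + 1)) ℝ} {AML S : Matrix (BlockIndex N) (BlockIndex N) ℝ}

/- The hypotheses `hAML` and `hS` of `stmt_14`, with the casts proved by terms instead of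
`omega`: `omega` caches its auxiliary lemmas, and sharing them with this section would change the
elaborated statement of `stmt_14`. -/
variable (hAML : ∀ (i j : Fin (N + 1)) (a : Fin (i.1 + 1)) (b : Fin (j.1 + 1)),
      AML ⟨i, a⟩ ⟨j, b⟩ =
        if hiN : i.1 = N then
          (1 / 2 : ℝ) * G j (Fin.cast (congrArg (· + 1) hiN) a) b
        else if hij : j.1 = i.1 + 1 then
          (1 / 2 : ℝ) * A ⟨i.1, Fin.val_lt_of_val_eq_succ hij⟩
            (Fin.cast (congrArg (· + 1) hij) b) a
        else if hji : i.1 = j.1 + 1 then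
          (1 / 2 : ℝ) * A ⟨j.1, Fin.val_lt_of_val_eq_succ hji⟩
            (Fin.cast (congrArg (· + 1) hji) a) b
        else 0)

variable (hS : ∀ (i j : Fin (N + 1)) (a : Fin (i.1 + 1)) (b : Fin (j.1 + 1)),
      S ⟨i, a⟩ ⟨j, b⟩ =
        if hij : i = j then
          if hiN : i.1 = N then
            H (Fin.cast (congrArg (· + 1) hiN) a) (Fin.cast (congrArg (· + 1) (hij ▸ hiN)) b)
          else if (a : ℕ) = (b : ℕ) then 1 else 0
        else 0)

include hS in
theorem scaling_mul_apply_of_ne_last {β : Type*} (M : Matrix (BlockIndex N) β ℝ)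
    {i : Fin (N + 1)} (hi : i ≠ Fin.last N) (a : Fin (i.1 + 1)) (x : β) :
    (S * M) ⟨i, a⟩ x = M ⟨i, a⟩ x := by
  have hiN : i.1 ≠ N := fun h => hi (Fin.ext h)
  rw [mul_apply, Fintype.sum_eq_single ⟨i, a⟩, hS, dif_pos rfl, dif_neg hiN, if_pos rfl,
    one_mul]
  rintro ⟨k, c⟩ hkc
  rw [hS]
  by_cases hik : i = k
  · subst hik
    have hac : (a : ℕ) ≠ c := fun h => hkc (Sigma.ext rfl (heq_of_eq (Fin.ext h.symm)))
    rw [dif_pos rfl, dif_neg hiN, if_neg hac, zero_mul]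
  · rw [dif_neg hik, zero_mul]

include hS hAML in
theorem scaling_mul_mlBlock_apply_last (j : Fin (N + 1)) (a : Fin (N + 1)) (b : Fin (j.1 + 1)) :
    (S * AML) ⟨Fin.last N, a⟩ ⟨j, b⟩ = 1 / 2 * (H * G j) a b := by
  rw [mul_apply, ← Finset.univ_sigma_univ, Finset.sum_sigma, Finset.sum_eq_single (Fin.last N),
    mul_apply, Finset.mul_sum]
  · refine Finset.sum_congr rfl fun c _ => ?_
    rw [hS, dif_pos rfl, dif_pos (Fin.val_last N), hAML, dif_pos (Fin.val_last N), mul_left_comm]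
    rfl
  · intro k _ hk
    exact Finset.sum_eq_zero fun c _ => by rw [hS, dif_neg hk.symm, zero_mul]
  · simp

include hAML in
theorem mlBlock_symm_of_ne_last {i j : Fin (N + 1)} (hi : i ≠ Fin.last N) (hj : j ≠ Fin.last N)
    (a : Fin (i.1 + 1)) (b : Fin (j.1 + 1)) :
    AML ⟨i, a⟩ ⟨j, b⟩ = AML ⟨j, b⟩ ⟨i, a⟩ := by
  have hiN : i.1 ≠ N := fun h => hi (Fin.ext h)
  have hjN : j.1 ≠ N := fun h => hj (Fin.ext h)
  rw [hAML, hAML, dif_neg hiN, dif_neg hjN]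
  by_cases hij : j.1 = i.1 + 1
  · rw [dif_pos hij, dif_neg (by omega), dif_pos hij]
  by_cases hji : i.1 = j.1 + 1
  · rw [dif_neg hij, dif_pos hji, dif_pos hji]
  · rw [dif_neg hij, dif_neg hji, dif_neg hji, dif_neg hij]

include hAML in
theorem mlBlock_apply_last_of_add_two_le {j : Fin (N + 1)} (hj : j.1 + 2 ≤ N)
    (a : Fin (N + 1)) (b : Fin (j.1 + 1)) : AML ⟨j, b⟩ ⟨Fin.last N, a⟩ = 0 := by
  rw [hAML, dif_neg (by omega), dif_neg (by simp only [Fin.val_last]; omega),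
    dif_neg (by simp only [Fin.val_last]; omega)]

include hAML in
theorem mlBlock_apply_pred_last (hN : 1 ≤ N) (a : Fin (N + 1)) (b : Fin (N - 1 + 1)) :
    AML ⟨⟨N - 1, Nat.sub_lt_succ N 1⟩, b⟩ ⟨Fin.last N, a⟩ =
      1 / 2 * A ⟨N - 1, Nat.sub_one_lt_of_le hN le_rfl⟩
        (Fin.cast (congrArg (· + 1) (Nat.sub_add_cancel hN)).symm a) b := by
  rw [hAML, dif_neg (Nat.sub_one_lt_of_le hN le_rfl).ne,
    dif_pos (by simp only [Fin.val_last]; omega)]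

end

/-- Let `𝒜ᴹᴸ` be the `(N+1)×(N+1)`-block matrix (blocks of degree `l` having size `l+1`)
obtained from the symmetric block-tridiagonal `P_N` matrix `𝒜` (with off-diagonal blocks
`𝒜_{l,l+1} = (1/2)A_lᵀ`, `𝒜_{l+1,l} = (1/2)A_l` and zero diagonal blocks) by replacing
its last block row with `(1/2)(G_0, …, G_N)`, and let `𝒮 = diag(I, …, I, H)` with `H`
symmetric positive definite. Then `𝒮 𝒜ᴹᴸ` is symmetric if and only if `G_j = 0` for
`0 ≤ j ≤ N−2`, `H G_{N−1} = A_{N−1}`, and `H G_N = (H G_N)ᵀ`. -/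
theorem stmt_14 (N : ℕ) (hN : 1 ≤ N)
    (A : ∀ l : Fin N, Matrix (Fin (l.1 + 2)) (Fin (l.1 + 1)) ℝ)
    (G : ∀ j : Fin (N + 1), Matrix (Fin (N + 1)) (Fin (j.1 + 1)) ℝ)
    (H : Matrix (Fin (N + 1)) (Fin (N + 1)) ℝ) (hH : H.PosDef)
    (AML S : Matrix ((l : Fin (N + 1)) × Fin (l.1 + 1))
      ((l : Fin (N + 1)) × Fin (l.1 + 1)) ℝ)
    (hAML : ∀ (i j : Fin (N + 1)) (a : Fin (i.1 + 1)) (b : Fin (j.1 + 1)),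
      AML ⟨i, a⟩ ⟨j, b⟩ =
        if hiN : i.1 = N then
          (1 / 2 : ℝ) * G j (Fin.cast (by omega) a) b
        else if hij : j.1 = i.1 + 1 then
          (1 / 2 : ℝ) * A ⟨i.1, by have := i.isLt; omega⟩ (Fin.cast (by simp only [Fin.val_mk]; omega) b) a
        else if hji : i.1 = j.1 + 1 then
          (1 / 2 : ℝ) * A ⟨j.1, by have := j.isLt; omega⟩ (Fin.cast (by simp only [Fin.val_mk]; omega) a) b
        else 0)
    (hS : ∀ (i j : Fin (N + 1)) (a : Fin (i.1 + 1)) (b : Fin (j.1 + 1)),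
      S ⟨i, a⟩ ⟨j, b⟩ =
        if hij : i = j then
          if hiN : i.1 = N then
            H (Fin.cast (by omega) a) (Fin.cast (by rw [← hij]; omega) b)
          else if (a : ℕ) = (b : ℕ) then 1 else 0
        else 0) :
    (S * AML).IsSymm ↔
      ((∀ j : Fin (N + 1), j.1 + 2 ≤ N → G j = 0) ∧
        H * G ⟨N - 1, by omega⟩ =
          (A ⟨N - 1, by omega⟩).submatrix (Fin.cast (by simp only [Fin.val_mk]; omega)) id ∧
        (H * G (Fin.last N)).IsSymm) := by
  have half_ne_zero : (1 / 2 : ℝ) ≠ 0 := by norm_num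
  have ne_last : ∀ j : Fin (N + 1), j.1 < N → j ≠ Fin.last N := fun j hj h => by
    simp [h] at hj
  have : Invertible H := hH.isUnit.invertible
  rw [isSymm_sigma_iff_of_symm_off _ (Fin.last N) fun i j a b hi hj => by
      rw [scaling_mul_apply_of_ne_last hS _ hi, scaling_mul_apply_of_ne_last hS _ hj,
        mlBlock_symm_of_ne_last hAML hi hj],
    Fin.forall_iff_lt_pred_and_pred_and_last hN]
  simp only [scaling_mul_mlBlock_apply_last hAML hS]
  refine and_congr (forall₂_congr fun j hj => ?_) (and_congr ?_ ?_)
  · simp only [scaling_mul_apply_of_ne_last hS _ (ne_last j (by omega)),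
      mlBlock_apply_last_of_add_two_le hAML hj, mul_eq_zero, half_ne_zero, false_or]
    exact ⟨fun h => mul_right_injective_of_invertible H (by ext a b; simpa using h a b),
      fun h a b => by simp [h]⟩
  · simp only [scaling_mul_apply_of_ne_last hS _
        (ne_last ⟨N - 1, Nat.sub_lt_succ N 1⟩ (Nat.sub_one_lt_of_le hN le_rfl)),
      mlBlock_apply_pred_last hAML hN, mul_right_inj' half_ne_zero]
    exact ⟨fun h => Matrix.ext h, fun h a b => congrFun₂ h a b⟩
  · simp only [mul_right_inj' half_ne_zero]
    exact forall_comm.trans IsSymm.ext_iff.symm
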